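/- Let $y_1, y_2, \ldots$ be i.i.d. random variables under $\Pi$, $S_n = \sum_{i=n-m+1}^n y_i$, and $T_F(h) = \inf\{n \geq m : S_n \geq h\}$. Then the worst-case false alarm probability is bounded as $\sup_{l \geq 1} \Pi(l \leq T_F(h) < l + m_\alpha) \leq 1 - [\Pi(S_m < h)]^{m_\alpha}$. -/

import Mathlib

open MeasureTheory ProbabilityTheory

/-- Moving sum `S n = ∑_{i=n-m+1}^n y i`. -/
noncomputable def movSum {Ω : Type*} (m : ℕ) (y : ℕ → Ω → ℝ) (n : ℕ) (ω : Ω) : ℝ :=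
  ∑ i ∈ Finset.Icc (n + 1 - m) n, y i ω

/-- FMA stopping time `T_F(h) = inf {n ≥ m : S_n ≥ h}` (equal to `⊤` if no such `n`). -/
noncomputable def fmaTime {Ω : Type*} (m : ℕ) (y : ℕ → Ω → ℝ) (h : ℝ) (ω : Ω) : ℕ∞ :=
  sInf ((fun n : ℕ => (n : ℕ∞)) '' {n : ℕ | m ≤ n ∧ h ≤ movSum m y n ω})

/-!
An alarm at a time `n ∈ [l, l + mα)` forces `n ≥ m` and `S_n ≥ h`, so the event
`{l ≤ T_F < l + mα}` misses `⋂_{n ∈ [max l m, l + mα)} {S_n < h}`. Each `{S_n < h}` is a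
decreasing event of finitely many of the `y_i`, so by the Harris inequality for product measures
(positive correlation of decreasing functions, proved by induction on the number of coordinates
from Chebyshev's one-dimensional argument) the intersection has probability at least
`∏ Pr(S_n < h) = Pr(S_m < h) ^ k` with `k ≤ mα`, every window sum having the law of `S_m`.
-/

open scoped ENNReal

theorem ENNReal.mul_add_mul_le_mul_add_mul {a b c d : ℝ≥0∞} (hab : a ≤ b) (hcd : c ≤ d) :
    a * d + b * c ≤ a * c + b * d := by
  obtain ⟨e, rfl⟩ := exists_add_of_le hcd
  calc a * (c + e) + b * c = a * c + b * c + a * e := by ring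
    _ ≤ a * c + b * c + b * e := by gcongr
    _ = a * c + b * (c + e) := by ring

theorem IsLowerSet.antitone_indicator_one {α : Type*} [Preorder α] {A : Set α} (hA : IsLowerSet A) :
    Antitone (A.indicator (1 : α → ℝ≥0∞)) := by
  intro x x' hx
  by_cases hx' : x' ∈ A
  · simp [Set.indicator_of_mem hx', Set.indicator_of_mem (hA hx hx')]
  · simp [Set.indicator_of_notMem hx']

section Harris

variable {α β : Type*} [MeasurableSpace α] [MeasurableSpace β]

def HarrisInequality [Preorder α] (μ : Measure α) : Prop :=
  ∀ f g : α → ℝ≥0∞, Antitone f → Antitone g → Measurable f → Measurable g →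
    (∫⁻ x, f x ∂μ) * ∫⁻ x, g x ∂μ ≤ ∫⁻ x, (f * g) x ∂μ

theorem harrisInequality_dirac [Preorder α] (a : α) : HarrisInequality (Measure.dirac a) :=
  fun f g _ _ hf hg => by
    rw [lintegral_dirac' a hf, lintegral_dirac' a hg, lintegral_dirac' a (hf.mul hg), Pi.mul_apply]

/-- Chebyshev's argument: `(f x - f y) (g x - g y) ≥ 0`, integrated over `μ ⊗ μ`. -/
theorem harrisInequality_of_linearOrder [LinearOrder α] (μ : Measure α) [IsProbabilityMeasure μ] :
    HarrisInequality μ := by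
  intro f g hf hg hfm hgm
  have hpair : ∀ z : α × α, f z.1 * g z.2 + f z.2 * g z.1 ≤ f z.1 * g z.1 + f z.2 * g z.2 := by
    rintro ⟨x, x'⟩
    rcases le_total x x' with hx | hx
    · simpa only [add_comm] using ENNReal.mul_add_mul_le_mul_add_mul (hf hx) (hg hx)
    · exact ENNReal.mul_add_mul_le_mul_add_mul (hf hx) (hg hx)
  have hcross : ∫⁻ z, f z.1 * g z.2 ∂μ.prod μ = (∫⁻ x, f x ∂μ) * ∫⁻ x, g x ∂μ :=
    lintegral_prod_mul hfm.aemeasurable hgm.aemeasurable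
  have hcross' : ∫⁻ z, f z.2 * g z.1 ∂μ.prod μ = (∫⁻ x, f x ∂μ) * ∫⁻ x, g x ∂μ := by
    simpa only [mul_comm] using
      lintegral_prod_mul (μ := μ) (ν := μ) hgm.aemeasurable hfm.aemeasurable
  have hdiag : ∫⁻ z, f z.1 * g z.1 ∂μ.prod μ = ∫⁻ x, (f * g) x ∂μ :=
    measurePreserving_fst.lintegral_comp (hfm.mul hgm)
  have hdiag' : ∫⁻ z, f z.2 * g z.2 ∂μ.prod μ = ∫⁻ x, (f * g) x ∂μ :=
    measurePreserving_snd.lintegral_comp (hfm.mul hgm)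
  have hint : 2 * ((∫⁻ x, f x ∂μ) * ∫⁻ x, g x ∂μ) ≤ 2 * ∫⁻ x, (f * g) x ∂μ :=
    calc 2 * ((∫⁻ x, f x ∂μ) * ∫⁻ x, g x ∂μ)
        = ∫⁻ z, f z.1 * g z.2 + f z.2 * g z.1 ∂μ.prod μ := by
          rw [lintegral_add_left (by fun_prop), hcross, hcross', two_mul]
      _ ≤ ∫⁻ z, f z.1 * g z.1 + f z.2 * g z.2 ∂μ.prod μ := lintegral_mono hpair
      _ = 2 * ∫⁻ x, (f * g) x ∂μ := by
          rw [lintegral_add_left (by fun_prop), hdiag, hdiag', two_mul]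
  exact (ENNReal.mul_le_mul_iff_right two_ne_zero ENNReal.ofNat_ne_top).mp hint

theorem HarrisInequality.of_measurePreserving [Preorder α] [Preorder β] {μ : Measure α}
    {ν : Measure β} (hν : HarrisInequality ν) {φ : β → α} (hφ : MeasurePreserving φ ν μ)
    (hφm : Monotone φ) : HarrisInequality μ := by
  intro f g hf hg hfm hgm
  rw [← hφ.lintegral_comp hfm, ← hφ.lintegral_comp hgm, ← hφ.lintegral_comp (hfm.mul hgm)]
  exact hν _ _ (hf.comp_monotone hφm) (hg.comp_monotone hφm) (hfm.comp hφ.measurable)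
    (hgm.comp hφ.measurable)

theorem HarrisInequality.prod [Preorder α] [Preorder β] {μ : Measure α} {ν : Measure β}
    [SFinite ν] (hμ : HarrisInequality μ) (hν : HarrisInequality ν) :
    HarrisInequality (μ.prod ν) := by
  intro f g hf hg hfm hgm
  have hslice : ∀ {φ : α × β → ℝ≥0∞}, Antitone φ → Antitone fun a => ∫⁻ b, φ (a, b) ∂ν :=
    fun hφ _ _ ha => lintegral_mono fun _ => hφ (Prod.mk_le_mk.2 ⟨ha, le_rfl⟩)
  rw [lintegral_prod _ hfm.aemeasurable, lintegral_prod _ hgm.aemeasurable,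
    lintegral_prod _ (hfm.mul hgm).aemeasurable]
  calc (∫⁻ a, ∫⁻ b, f (a, b) ∂ν ∂μ) * ∫⁻ a, ∫⁻ b, g (a, b) ∂ν ∂μ
      ≤ ∫⁻ a, (∫⁻ b, f (a, b) ∂ν) * ∫⁻ b, g (a, b) ∂ν ∂μ :=
        hμ _ _ (hslice hf) (hslice hg) hfm.lintegral_prod_right' hgm.lintegral_prod_right'
    _ ≤ ∫⁻ a, ∫⁻ b, f (a, b) * g (a, b) ∂ν ∂μ := lintegral_mono fun a =>
        hν _ _ (fun _ _ hb => hf (Prod.mk_le_mk.2 ⟨le_rfl, hb⟩))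
          (fun _ _ hb => hg (Prod.mk_le_mk.2 ⟨le_rfl, hb⟩))
          (hfm.comp measurable_prodMk_left) (hgm.comp measurable_prodMk_left)

theorem harrisInequality_pi {n : ℕ} {X : Fin n → Type*} [∀ i, MeasurableSpace (X i)]
    [∀ i, Preorder (X i)] (μ : ∀ i, Measure (X i)) [∀ i, SigmaFinite (μ i)]
    (hμ : ∀ i, HarrisInequality (μ i)) : HarrisInequality (Measure.pi μ) := by
  induction n with
  | zero => rw [Measure.pi_of_empty]; exact harrisInequality_dirac _
  | succ n ih =>
    have hprod := (hμ 0).prod (ih (fun j => μ (Fin.succAbove 0 j)) fun j => hμ _)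
    exact hprod.of_measurePreserving (measurePreserving_piFinSuccAbove μ 0).symm
      (Fin.insertNthOrderIso X 0).monotone

theorem HarrisInequality.prod_le_measure_biInter [Preorder α] {μ : Measure α}
    [IsProbabilityMeasure μ] (hμ : HarrisInequality μ) {ι : Type*} (s : Finset ι) {A : ι → Set α}
    (hA : ∀ j ∈ s, IsLowerSet (A j)) (hAm : ∀ j ∈ s, MeasurableSet (A j)) :
    ∏ j ∈ s, μ (A j) ≤ μ (⋂ j ∈ s, A j) := by
  classical
  induction s using Finset.induction_on with
  | empty => simp
  | insert a s ha ih =>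
    simp only [Finset.mem_insert, forall_eq_or_imp] at hA hAm
    have hI : IsLowerSet (⋂ j ∈ s, A j) := isLowerSet_iInter₂ hA.2
    have hIm : MeasurableSet (⋂ j ∈ s, A j) := s.measurableSet_biInter hAm.2
    have hcorr := hμ _ _ hA.1.antitone_indicator_one hI.antitone_indicator_one
      (measurable_one.indicator hAm.1) (measurable_one.indicator hIm)
    rw [← Set.inter_indicator_one, lintegral_indicator_one hAm.1, lintegral_indicator_one hIm,
      lintegral_indicator_one (hAm.1.inter hIm)] at hcorr
    rw [Finset.prod_insert ha, Finset.set_biInter_insert]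
    exact (mul_le_mul_right (ih hA.2 hAm.2) _).trans hcorr

end Harris

section IndependentFamilies

variable {Ω α : Type*} [MeasurableSpace Ω] [MeasurableSpace α] {P : Measure Ω}
  [IsProbabilityMeasure P]

theorem ProbabilityTheory.iIndepFun.prod_measure_le_measure_biInter [LinearOrder α] {N : ℕ}
    {X : Fin N → Ω → α} (hX : ∀ i, Measurable (X i)) (hind : iIndepFun X P) {ι : Type*}
    (s : Finset ι) {A : ι → Set (Fin N → α)} (hA : ∀ j ∈ s, IsLowerSet (A j))
    (hAm : ∀ j ∈ s, MeasurableSet (A j)) :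
    ∏ j ∈ s, P ((fun ω i => X i ω) ⁻¹' A j) ≤ P (⋂ j ∈ s, (fun ω i => X i ω) ⁻¹' A j) := by
  have hXm : Measurable fun ω i => X i ω := measurable_pi_lambda _ hX
  have : IsProbabilityMeasure (P.map fun ω i => X i ω) :=
    Measure.isProbabilityMeasure_map hXm.aemeasurable
  have := fun i => Measure.isProbabilityMeasure_map (μ := P) (hX i).aemeasurable
  have hharris : HarrisInequality (P.map fun ω i => X i ω) := by
    rw [(iIndepFun_iff_map_fun_eq_pi_map fun i => (hX i).aemeasurable).mp hind]
    exact harrisInequality_pi _ fun i => harrisInequality_of_linearOrder _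
  rw [← Set.preimage_iInter₂, ← Measure.map_apply hXm (s.measurableSet_biInter hAm)]
  refine le_of_eq_of_le (Finset.prod_congr rfl fun j hj => ?_)
    (hharris.prod_le_measure_biInter s hA hAm)
  exact (Measure.map_apply hXm (hAm j hj)).symm

theorem ProbabilityTheory.iIndepFun.map_comp_eq_pi {ι κ : Type*} [Fintype κ] {y : ι → Ω → α}
    (hy : ∀ i, Measurable (y i)) (hind : iIndepFun y P) {ν : Measure α}
    (hident : ∀ i, P.map (y i) = ν) {g : κ → ι} (hg : g.Injective) :
    P.map (fun ω j => y (g j) ω) = Measure.pi fun _ => ν := by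
  rw [(iIndepFun_iff_map_fun_eq_pi_map fun j => (hy (g j)).aemeasurable).mp (hind.precomp hg)]
  simp only [hident]

end IndependentFamilies

theorem Fin.sum_filter_val_mem {M : Type*} [AddCommMonoid M] {N : ℕ} {t : Finset ℕ}
    (ht : ∀ i ∈ t, i < N) (f : ℕ → M) : ∑ i : Fin N with ↑i ∈ t, f i = ∑ i ∈ t, f i := by
  rw [Finset.sum_filter, Fin.sum_univ_eq_sum_range (fun i => if i ∈ t then f i else 0),
    Finset.sum_ite_mem, Finset.inter_eq_right.2 fun i hi => Finset.mem_range.2 (ht i hi)]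

section MovingSums

variable {Ω : Type*} (m : ℕ) (y : ℕ → Ω → ℝ) (h : ℝ)

theorem movSum_eq_sum_fin {n : ℕ} (hmn : m ≤ n + 1) (ω : Ω) :
    movSum m y n ω = ∑ j : Fin m, y (n + 1 - m + j) ω := by
  rw [movSum, ← Finset.Ico_add_one_right_eq_Icc, Finset.sum_Ico_eq_sum_range,
    Fin.sum_univ_eq_sum_range (fun j => y (n + 1 - m + j) ω), Nat.sub_sub_self hmn]

theorem exists_fmaTime_eq {ω : Ω} (hT : fmaTime m y h ω ≠ ⊤) :
    ∃ n : ℕ, fmaTime m y h ω = n ∧ m ≤ n ∧ h ≤ movSum m y n ω := by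
  have hne : {n | m ≤ n ∧ h ≤ movSum m y n ω}.Nonempty := by
    by_contra hempty
    rw [Set.not_nonempty_iff_eq_empty] at hempty
    simp [fmaTime, hempty] at hT
  obtain ⟨n, hn, hTn⟩ := csInf_mem (hne.image ((↑) : ℕ → ℕ∞))
  exact ⟨n, hTn.symm, hn⟩

theorem setOf_fmaTime_mem_Ico_subset (l N : ℕ) :
    {ω | (l : ℕ∞) ≤ fmaTime m y h ω ∧ fmaTime m y h ω < N} ⊆
      (⋂ n ∈ Finset.Ico (max l m) N, {ω | movSum m y n ω < h})ᶜ := by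
  rintro ω ⟨hl, hN⟩ hbelow
  obtain ⟨n, hn, hmn, hhn⟩ := exists_fmaTime_eq m y h (hN.trans (ENat.natCast_lt_top N)).ne
  rw [hn, Nat.cast_le] at hl
  rw [hn, Nat.cast_lt] at hN
  have hnI : n ∈ Finset.Ico (max l m) N := Finset.mem_Ico.2 ⟨max_le hl hmn, hN⟩
  exact (Set.mem_iInter₂.1 hbelow n hnI).not_ge hhn

variable [MeasurableSpace Ω] {m y}

theorem measurable_movSum (hy : ∀ i, Measurable (y i)) (n : ℕ) : Measurable (movSum m y n) :=
  Finset.measurable_sum _ fun i _ => hy i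

variable {P : Measure Ω} [IsProbabilityMeasure P]

theorem measure_movSum_lt (hy : ∀ i, Measurable (y i)) (hind : iIndepFun y P)
    {ν : Measure ℝ} (hident : ∀ i, P.map (y i) = ν) {n : ℕ} (hmn : m ≤ n + 1) :
    P {ω | movSum m y n ω < h} = Measure.pi (fun _ : Fin m => ν) {x | ∑ j, x j < h} := by
  have hg : (fun j : Fin m => n + 1 - m + j).Injective :=
    (add_right_injective _).comp Fin.val_injective
  rw [← hind.map_comp_eq_pi hy hident hg,
    Measure.map_apply (measurable_pi_lambda _ fun j => hy _)
      (measurableSet_lt (by fun_prop) measurable_const)]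
  simp only [Set.preimage_ofPred_eq, movSum_eq_sum_fin m y hmn]

theorem ProbabilityTheory.iIndepFun.prod_measure_movSum_lt_le (hy : ∀ i, Measurable (y i))
    (hind : iIndepFun y P) (s : Finset ℕ) :
    ∏ n ∈ s, P {ω | movSum m y n ω < h} ≤ P (⋂ n ∈ s, {ω | movSum m y n ω < h}) := by
  obtain ⟨N, hN⟩ := s.exists_nat_subset_range
  let A : ℕ → Set (Fin N → ℝ) := fun n =>
    {x | ∑ i : Fin N with ↑i ∈ Finset.Icc (n + 1 - m) n, x i < h}
  have hA : ∀ n ∈ s, {ω | movSum m y n ω < h} = (fun ω (i : Fin N) => y i ω) ⁻¹' A n := by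
    intro n hn
    have hwin : ∀ i ∈ Finset.Icc (n + 1 - m) n, i < N := fun i hi =>
      (Finset.mem_Icc.1 hi).2.trans_lt (Finset.mem_range.1 (hN hn))
    ext ω
    rw [Set.mem_preimage, Set.mem_ofPred_eq, Set.mem_ofPred_eq,
      Fin.sum_filter_val_mem hwin fun i => y i ω, movSum]
  have hlower : ∀ n ∈ s, IsLowerSet (A n) := fun n _ x x' hx hx' =>
    (Finset.sum_le_sum fun i _ => hx i).trans_lt hx'
  have hAm : ∀ n ∈ s, MeasurableSet (A n) := fun n _ =>
    measurableSet_lt (by fun_prop) measurable_const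
  rw [Finset.prod_congr rfl fun n hn => congrArg P (hA n hn), Set.iInter₂_congr hA]
  exact (hind.precomp Fin.val_injective).prod_measure_le_measure_biInter (fun i => hy i) s
    hlower hAm

end MovingSums

theorem fma_false_alarm_bound_general {Ω : Type*} [MeasurableSpace Ω]
    (Pr : Measure Ω) [IsProbabilityMeasure Pr]
    (m : ℕ) (mα : ℕ) (y : ℕ → Ω → ℝ)
    (hmeas : ∀ i, Measurable (y i))
    (hindep : iIndepFun y Pr)
    (hident : ∀ i, Measure.map (y i) Pr = Measure.map (y 1) Pr)
    (h : ℝ) :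
    (⨆ (l : ℕ) (_ : 1 ≤ l),
        Pr {ω | (l : ℕ∞) ≤ fmaTime m y h ω ∧ fmaTime m y h ω < (l + mα : ℕ)})
      ≤ 1 - (Pr {ω | movSum m y m ω < h}) ^ mα := by
  set p := Pr {ω | movSum m y m ω < h}
  refine iSup₂_le fun l _ => ?_
  set s := Finset.Ico (max l m) (l + mα)
  have hp : ∀ n ∈ s, Pr {ω | movSum m y n ω < h} = p := fun n hn => by
    have hmn : m ≤ n := (le_max_right l m).trans (Finset.mem_Ico.1 hn).1
    exact (measure_movSum_lt h hmeas hindep hident (by omega)).trans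
      (measure_movSum_lt h hmeas hindep hident (by omega)).symm
  have hmeasI : MeasurableSet (⋂ n ∈ s, {ω | movSum m y n ω < h}) :=
    s.measurableSet_biInter fun n _ => measurableSet_lt (measurable_movSum hmeas n) measurable_const
  calc Pr {ω | (l : ℕ∞) ≤ fmaTime m y h ω ∧ fmaTime m y h ω < (l + mα : ℕ)}
      ≤ Pr (⋂ n ∈ s, {ω | movSum m y n ω < h})ᶜ :=
        measure_mono (setOf_fmaTime_mem_Ico_subset m y h l (l + mα))
    _ = 1 - Pr (⋂ n ∈ s, {ω | movSum m y n ω < h}) := prob_compl_eq_one_sub hmeasI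
    _ ≤ 1 - p ^ mα := by
      gcongr
      calc p ^ mα ≤ p ^ s.card :=
            pow_le_pow_right_of_le_one' prob_le_one (by simp only [s, Nat.card_Ico]; omega)
        _ = ∏ n ∈ s, Pr {ω | movSum m y n ω < h} := (Finset.prod_eq_pow_card hp).symm
        _ ≤ _ := hindep.prod_measure_movSum_lt_le h hmeas s

/-- the worst-case false alarm probability is bounded by
`1 - Pr(S_m < h)^mα`. -/
theorem fma_false_alarm_bound {Ω : Type*} [MeasurableSpace Ω]
    (Pr : Measure Ω) [IsProbabilityMeasure Pr]
    (m : ℕ) (hm : 1 ≤ m) (mα : ℕ) (hmα : 1 ≤ mα) (y : ℕ → Ω → ℝ)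
    (hmeas : ∀ i, Measurable (y i))
    (hindep : iIndepFun y Pr)
    (hident : ∀ i, Measure.map (y i) Pr = Measure.map (y 1) Pr)
    (h : ℝ) :
    (⨆ (l : ℕ) (_ : 1 ≤ l),
        Pr {ω | (l : ℕ∞) ≤ fmaTime m y h ω ∧ fmaTime m y h ω < (l + mα : ℕ)})
      ≤ 1 - (Pr {ω | movSum m y m ω < h}) ^ mα :=
  fma_false_alarm_bound_general Pr m mα y hmeas hindep hident h
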